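/- arXiv:2004.10846 — 2 statements merged into one kernel-verified Lean document; each statement's English description precedes it below -/
import Mathlib

section
/- Let 1 ≤ Z₁ < Z₂ with β·Z₁ ≤ 1 ≤ β·Z₂ and β·Z₂ ≥ Z₁. Then sup_{z ∈ [Z₁, Z₂/β]} (μ_{[Z₁,Z₂]}(z) − z^{−α}) < sup_{z ∈ [Z₁, Z₂/β]} (μ̂₂(z) − z^{−α}) if and only if p < 1 − (β·Z₂)^{−α}. -/
open Set

/-- Tail function `F̄(t) = min(1, t^{-α})`. -/
noncomputable def Fbar (α t : ℝ) : ℝ := min 1 (t ^ (-α))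

/-- Biased school assignment of a G₂ student of true potential `z`. -/
noncomputable def muHat2 (α β p z : ℝ) : ℝ :=
  (1 - p) * Fbar α (β * z) + p * z ^ (-α)

/-- School attended by a G₂ student of true potential `z` after the G₂ students
with true potentials in `[Z₁, Z₂]` have been debiased. -/
noncomputable def muT (α β p Z₁ Z₂ z : ℝ) : ℝ :=
  if z < Z₁ then (1 - p) * Fbar α (β * z) + p * z ^ (-α)
  else if z ≤ Z₂ then
    (1 - p) * z ^ (-α) + p * (z ^ (-α) - Z₂ ^ (-α)) + p * (max (z / β) Z₂) ^ (-α)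
  else
    (1 - p) * Fbar α (β * z) + p * z ^ (-α)
      + p * max 0 ((max (β * z) Z₁) ^ (-α) - Z₂ ^ (-α))

/-!
Before the intervention the mistreatment of a G₂ student is `(1 - p) (F̄(βz) - z^{-α})`, and
`F̄(t) - β^α t^{-α} ≤ 1 - β^α` with equality at `t = 1`, so its supremum is `(1 - p)(1 - β^α)`,
attained at `z = 1/β`. After debiasing, the students in `[Z₁, Z₂]` are no longer mistreated,
while on `(Z₂, Z₂/β]` the mistreatment is `(β^{-α} - 1 + p) z^{-α} - p Z₂^{-α}`, decreasing in `z`;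
its supremum `(βZ₂)^{-α}(1 - β^α)` is approached as `z ↓ Z₂` but not attained.
Comparing the two suprema gives the criterion.
-/

open Filter Topology

lemma rpow_neg_eq_rpow_mul_rpow_neg_mul {α β z : ℝ} (hβ : 0 < β) (hz : 0 ≤ z) :
    z ^ (-α) = β ^ α * (β * z) ^ (-α) := by
  rw [Real.mul_rpow hβ.le hz, ← mul_assoc, ← Real.rpow_add hβ, add_neg_cancel, Real.rpow_zero,
    one_mul]

lemma Fbar_of_one_le {α t : ℝ} (hα : 0 ≤ α) (ht : 1 ≤ t) : Fbar α t = t ^ (-α) :=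
  min_eq_right (Real.rpow_le_one_of_one_le_of_nonpos ht (neg_nonpos.2 hα))

lemma Fbar_sub_mul_rpow_neg_le {α c t : ℝ} (hα : 0 ≤ α) (hc₀ : 0 ≤ c) (hc₁ : c ≤ 1)
    (ht : 0 < t) : Fbar α t - c * t ^ (-α) ≤ 1 - c := by
  rcases le_total t 1 with ht₁ | ht₁
  · have h₁ : 1 ≤ t ^ (-α) := Real.one_le_rpow_of_pos_of_le_one_of_nonpos ht ht₁ (neg_nonpos.2 hα)
    have h₂ : Fbar α t ≤ 1 := min_le_left _ _
    nlinarith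
  · have h₁ : t ^ (-α) ≤ 1 := Real.rpow_le_one_of_one_le_of_nonpos ht₁ (neg_nonpos.2 hα)
    have h₂ : Fbar α t ≤ t ^ (-α) := min_le_right _ _
    nlinarith

lemma muHat2_sub_rpow_neg (α β p z : ℝ) :
    muHat2 α β p z - z ^ (-α) = (1 - p) * (Fbar α (β * z) - z ^ (-α)) := by
  rw [muHat2]
  ring

lemma isGreatest_muHat2_sub_image {α β p : ℝ} {s : Set ℝ} (hα : 0 ≤ α) (hβ₀ : 0 < β)
    (hβ₁ : β ≤ 1) (hp : p ≤ 1) (hs : s ⊆ Ioi 0) (hβs : β⁻¹ ∈ s) :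
    IsGreatest ((fun z => muHat2 α β p z - z ^ (-α)) '' s) ((1 - p) * (1 - β ^ α)) := by
  refine ⟨⟨β⁻¹, hβs, ?_⟩, ?_⟩
  · dsimp only
    rw [muHat2_sub_rpow_neg, mul_inv_cancel₀ hβ₀.ne', Fbar, Real.one_rpow, min_self,
      Real.inv_rpow hβ₀.le, Real.rpow_neg hβ₀.le, inv_inv]
  · rintro _ ⟨z, hz, rfl⟩
    have hz₀ : 0 < z := hs hz
    dsimp only
    rw [muHat2_sub_rpow_neg, rpow_neg_eq_rpow_mul_rpow_neg_mul (α := α) hβ₀ hz₀.le]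
    exact mul_le_mul_of_nonneg_left
      (Fbar_sub_mul_rpow_neg_le hα (by positivity) (Real.rpow_le_one hβ₀.le hβ₁ hα)
        (mul_pos hβ₀ hz₀))
      (sub_nonneg.2 hp)

lemma muT_sub_rpow_neg_nonpos {α β p Z₁ Z₂ z : ℝ} (hα : 0 ≤ α) (hp : 0 ≤ p) (hZ₂ : 0 < Z₂)
    (hz : z ∈ Icc Z₁ Z₂) : muT α β p Z₁ Z₂ z - z ^ (-α) ≤ 0 := by
  have h : (max (z / β) Z₂) ^ (-α) ≤ Z₂ ^ (-α) :=
    Real.rpow_le_rpow_of_nonpos hZ₂ (le_max_right _ _) (neg_nonpos.2 hα)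
  rw [muT, if_neg (not_lt.2 hz.1), if_pos hz.2]
  nlinarith

lemma muT_sub_rpow_neg_of_mem_Ioc {α β p Z₁ Z₂ z : ℝ} (hα : 0 ≤ α) (hβ : 0 < β)
    (hZ : Z₁ ≤ Z₂) (hover : Z₁ ≤ β * Z₂) (hβZ₂ : 1 ≤ β * Z₂) (hz : z ∈ Ioc Z₂ (Z₂ / β)) :
    muT α β p Z₁ Z₂ z - z ^ (-α) = (β ^ (-α) - (1 - p)) * z ^ (-α) - p * Z₂ ^ (-α) := by
  obtain ⟨hZ₂z, hzZ₂⟩ := hz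
  have hβz : β * Z₂ ≤ β * z := by gcongr
  have hβzZ₂ : β * z ≤ Z₂ := (le_div_iff₀' hβ).1 hzZ₂
  have hz₀ : 0 < z := pos_of_mul_pos_right (by linarith) hβ.le
  have hmax : max 0 ((max (β * z) Z₁) ^ (-α) - Z₂ ^ (-α)) = (β * z) ^ (-α) - Z₂ ^ (-α) := by
    rw [max_eq_left (hover.trans hβz), max_eq_right (sub_nonneg.2
      (Real.rpow_le_rpow_of_nonpos (by linarith) hβzZ₂ (neg_nonpos.2 hα)))]
  rw [muT, if_neg (by linarith), if_neg (not_le.2 hZ₂z), hmax,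
    Fbar_of_one_le hα (hβZ₂.trans hβz), Real.mul_rpow hβ.le hz₀.le]
  ring

lemma isLUB_muT_sub_image {α β p Z₁ Z₂ : ℝ} (hα : 0 ≤ α) (hβ₀ : 0 < β) (hβ₁ : β < 1)
    (hp : 0 ≤ p) (hover : Z₁ ≤ β * Z₂) (hβZ₂ : 1 ≤ β * Z₂) :
    IsLUB ((fun z => muT α β p Z₁ Z₂ z - z ^ (-α)) '' Icc Z₁ (Z₂ / β))
      ((β * Z₂) ^ (-α) * (1 - β ^ α)) := by
  set g : ℝ → ℝ := fun z => (β ^ (-α) - (1 - p)) * z ^ (-α) - p * Z₂ ^ (-α) with hg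
  have hZ₂ : 0 < Z₂ := pos_of_mul_pos_right (by linarith) hβ₀.le
  have hZ₂β : Z₂ < Z₂ / β := by rw [lt_div_iff₀ hβ₀]; nlinarith
  have hZ : Z₁ ≤ Z₂ := hover.trans (by nlinarith)
  have hg_eq : EqOn (fun z => muT α β p Z₁ Z₂ z - z ^ (-α)) g (Ioc Z₂ (Z₂ / β)) :=
    fun z hz => muT_sub_rpow_neg_of_mem_Ioc hα hβ₀ hZ hover hβZ₂ hz
  have hgZ₂ : g Z₂ = (β * Z₂) ^ (-α) * (1 - β ^ α) := by
    have h : β ^ (-α) * β ^ α = 1 := by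
      rw [← Real.rpow_add hβ₀, neg_add_cancel, Real.rpow_zero]
    rw [hg, Real.mul_rpow hβ₀.le hZ₂.le]
    linear_combination Z₂ ^ (-α) * h
  rw [← hgZ₂]
  refine isLUB_of_mem_closure ?_ ?_
  · rintro _ ⟨z, hz, rfl⟩
    rcases le_or_gt z Z₂ with hzZ₂ | hZ₂z
    · refine (muT_sub_rpow_neg_nonpos hα hp hZ₂ ⟨hz.1, hzZ₂⟩).trans ?_
      rw [hgZ₂]
      exact mul_nonneg (by positivity) (sub_nonneg.2 (Real.rpow_le_one hβ₀.le hβ₁.le hα))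
    · have hcoeff : 0 ≤ β ^ (-α) - (1 - p) := by
        linarith [Real.one_le_rpow_of_pos_of_le_one_of_nonpos hβ₀ hβ₁.le (neg_nonpos.2 hα)]
      rw [hg_eq ⟨hZ₂z, hz.2⟩]
      exact sub_le_sub_right (mul_le_mul_of_nonneg_left
        (Real.rpow_le_rpow_of_nonpos hZ₂ hZ₂z.le (neg_nonpos.2 hα)) hcoeff) _
  · have hg_lim : Tendsto g (𝓝[>] Z₂) (𝓝 (g Z₂)) :=
      (((Real.continuousAt_rpow_const Z₂ (-α) (Or.inl hZ₂.ne')).const_mul _).sub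
        continuousAt_const).tendsto.mono_left nhdsWithin_le_nhds
    refine mem_closure_of_tendsto hg_lim ?_
    filter_upwards [Ioc_mem_nhdsGT hZ₂β] with z hz
    exact ⟨z, ⟨hZ.trans hz.1.le, hz.2⟩, hg_eq hz⟩

theorem intervention_improves_iff_caseI2_general (α β p Z₁ Z₂ : ℝ) (hα : 0 < α)
    (hβ : β ∈ Ioo (0:ℝ) 1) (hp : p ∈ Ioo (0:ℝ) 1)
    (hZ₁ : 1 ≤ Z₁) (hlo : β * Z₁ ≤ 1)
    (hover : Z₁ ≤ β * Z₂) :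
    sSup ((fun z => muT α β p Z₁ Z₂ z - z ^ (-α)) '' Icc Z₁ (Z₂ / β))
      < sSup ((fun z => muHat2 α β p z - z ^ (-α)) '' Icc Z₁ (Z₂ / β))
      ↔ p < 1 - (β * Z₂) ^ (-α) := by
  obtain ⟨hβ₀, hβ₁⟩ := hβ
  obtain ⟨hp₀, hp₁⟩ := hp
  have hβZ₂ : 1 ≤ β * Z₂ := hZ₁.trans hover
  have hβinv : β⁻¹ ∈ Icc Z₁ (Z₂ / β) := by
    rw [← one_div, mem_Icc, le_div_iff₀' hβ₀, div_le_div_iff_of_pos_right hβ₀]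
    exact ⟨hlo, by nlinarith⟩
  have hpos : Icc Z₁ (Z₂ / β) ⊆ Ioi 0 := fun z hz => zero_lt_one.trans_le (hZ₁.trans hz.1)
  rw [(isLUB_muT_sub_image hα.le hβ₀ hβ₁ hp₀.le hover hβZ₂).csSup_eq
      ⟨_, mem_image_of_mem _ ⟨le_rfl, hβinv.1.trans hβinv.2⟩⟩,
    (isGreatest_muHat2_sub_image hα.le hβ₀ hβ₁.le hp₁.le hpos hβinv).csSup_eq,
    mul_lt_mul_iff_left₀ (sub_pos.2 (Real.rpow_lt_one hβ₀.le hβ₁ hα)), lt_sub_comm]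

/-- Case I.2: the intervention reduces the maximum mistreatment over the
affected region if and only if `p < 1 - (βZ₂)^{-α}`. -/
theorem intervention_improves_iff_caseI2 (α β p Z₁ Z₂ : ℝ) (hα : 0 < α)
    (hβ : β ∈ Ioo (0:ℝ) 1) (hp : p ∈ Ioo (0:ℝ) 1)
    (hZ₁ : 1 ≤ Z₁) (hZ : Z₁ < Z₂) (hlo : β * Z₁ ≤ 1) (hhi : 1 ≤ β * Z₂)
    (hover : Z₁ ≤ β * Z₂) :
    sSup ((fun z => muT α β p Z₁ Z₂ z - z ^ (-α)) '' Icc Z₁ (Z₂ / β))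
      < sSup ((fun z => muHat2 α β p z - z ^ (-α)) '' Icc Z₁ (Z₂ / β))
      ↔ p < 1 - (β * Z₂) ^ (-α) :=
  intervention_improves_iff_caseI2_general α β p Z₁ Z₂ hα hβ hp hZ₁ hlo hover
end

section
/- Let 1 ≤ Z₁ < Z₂ with β·Z₁ ≤ 1 ≤ β·Z₂ ≤ Z₁. Then sup_{z ∈ [Z₁, Z₂/β]} (μ_{[Z₁,Z₂]}(z) − z^{−α}) < sup_{z ∈ [Z₁, Z₂/β]} (μ̂₂(z) − z^{−α}) if and only if p·(Z₁^{−α} − Z₂^{−α}) < (1−p)·(β^{−α} − 1)·(β^α − Z₂^{−α}). -/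
open Set

/-- `x ↦ x^{-α}` is antitone on positives. -/
lemma rpow_neg_anti {α x y : ℝ} (hα : 0 < α) (hx : 0 < x) (hxy : x ≤ y) :
    y ^ (-α) ≤ x ^ (-α) := by
  have hy : 0 < y := hx.trans_le hxy
  rw [Real.rpow_neg hx.le, Real.rpow_neg hy.le]
  exact inv_anti₀ (Real.rpow_pos_of_pos hx α) (Real.rpow_le_rpow hx.le hxy hα.le)

lemma rpow_neg_anti_strict {α x y : ℝ} (hα : 0 < α) (hx : 0 < x) (hxy : x < y) :
    y ^ (-α) < x ^ (-α) := by
  have hy : 0 < y := hx.trans hxy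
  rw [Real.rpow_neg hx.le, Real.rpow_neg hy.le]
  exact inv_strictAnti₀ (Real.rpow_pos_of_pos hx α) (Real.rpow_lt_rpow hx.le hxy hα)

lemma inv_rpow_neg {α β : ℝ} (hβ : 0 < β) : (β⁻¹ : ℝ) ^ (-α) = β ^ α := by
  rw [Real.inv_rpow hβ.le, Real.rpow_neg hβ.le, inv_inv]

/-- Case II.2: the intervention reduces the maximum mistreatment over the
affected region if and only if
`p(Z₁^{-α} - Z₂^{-α}) < (1-p)(β^{-α}-1)(β^α - Z₂^{-α})`. -/
theorem intervention_improves_iff_caseII2 (α β p Z₁ Z₂ : ℝ) (hα : 0 < α)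
    (hβ : β ∈ Ioo (0:ℝ) 1) (hp : p ∈ Ioo (0:ℝ) 1)
    (hZ₁ : 1 ≤ Z₁) (hZ : Z₁ < Z₂) (hlo : β * Z₁ ≤ 1) (hhi : 1 ≤ β * Z₂)
    (hdisj : β * Z₂ ≤ Z₁) :
    sSup ((fun z => muT α β p Z₁ Z₂ z - z ^ (-α)) '' Icc Z₁ (Z₂ / β))
      < sSup ((fun z => muHat2 α β p z - z ^ (-α)) '' Icc Z₁ (Z₂ / β))
      ↔ p * (Z₁ ^ (-α) - Z₂ ^ (-α))
          < (1 - p) * (β ^ (-α) - 1) * (β ^ α - Z₂ ^ (-α)) := by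
  obtain ⟨hβ0, hβ1⟩ := hβ
  obtain ⟨hp0, hp1⟩ := hp
  have hZ₁0 : (0:ℝ) < Z₁ := lt_of_lt_of_le one_pos hZ₁
  have hZ₂0 : (0:ℝ) < Z₂ := hZ₁0.trans hZ
  have hZ₂1 : (1:ℝ) ≤ Z₂ := hZ₁.trans hZ.le
  have hA0 : 0 < β ^ α := Real.rpow_pos_of_pos hβ0 α
  have hC0 : 0 < Z₂ ^ (-α) := Real.rpow_pos_of_pos hZ₂0 _
  have hAB : β ^ α * β ^ (-α) = 1 := by
    rw [← Real.rpow_add hβ0]; simp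
  have hA1 : β ^ α < 1 := Real.rpow_lt_one hβ0.le hβ1 hα
  have hB1 : 1 < β ^ (-α) := by nlinarith
  have hCD : Z₂ ^ (-α) < Z₁ ^ (-α) := rpow_neg_anti_strict hα hZ₁0 hZ
  have hZ₂div : Z₂ < Z₂ / β := by
    rw [lt_div_iff₀ hβ0]; nlinarith
  have hIcc : Z₁ ≤ Z₂ / β := le_of_lt (hZ.trans hZ₂div)
  have hinv_mem : β⁻¹ ∈ Icc Z₁ (Z₂ / β) := by
    constructor
    · rw [le_inv_comm₀ hZ₁0 hβ0, inv_eq_one_div, le_div_iff₀ hZ₁0]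
      linarith [mul_comm β Z₁]
    · rw [inv_eq_one_div, div_le_div_iff_of_pos_right hβ0]; linarith
  have hinv_val : (β⁻¹ : ℝ) ^ (-α) = β ^ α := inv_rpow_neg hβ0
  -- Supremum for muHat2
  have hsup1 : sSup ((fun z => muHat2 α β p z - z ^ (-α)) '' Icc Z₁ (Z₂ / β))
      = (1 - p) * (1 - β ^ α) := by
    apply IsGreatest.csSup_eq
    constructor
    · refine ⟨β⁻¹, hinv_mem, ?_⟩
      simp only [muHat2, Fbar, mul_inv_cancel₀ hβ0.ne', Real.one_rpow, min_self, hinv_val]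
      ring
    · rintro y ⟨z, hz, rfl⟩
      obtain ⟨hz1, hz2⟩ := hz
      have hz0 : 0 < z := hZ₁0.trans_le hz1
      have key : Fbar α (β * z) - z ^ (-α) ≤ 1 - β ^ α := by
        rcases le_total z β⁻¹ with h | h
        · have h1 : β ^ α ≤ z ^ (-α) := hinv_val ▸ rpow_neg_anti hα hz0 h
          have h2 := min_le_left (1:ℝ) ((β * z) ^ (-α))
          simp only [Fbar]; linarith
        · have h1 : Fbar α (β * z) ≤ (β * z) ^ (-α) := min_le_right _ _
          have h2 : (β * z) ^ (-α) = β ^ (-α) * z ^ (-α) := Real.mul_rpow hβ0.le hz0.le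
          have h3 : z ^ (-α) ≤ β ^ α := hinv_val ▸ rpow_neg_anti hα (inv_pos.mpr hβ0) h
          have h1' : Fbar α (β * z) ≤ β ^ (-α) * z ^ (-α) := h2 ▸ h1
          have h5 : (β ^ (-α) - 1) * z ^ (-α) ≤ (β ^ (-α) - 1) * β ^ α :=
            mul_le_mul_of_nonneg_left h3 (by linarith)
          have h6 : (β ^ (-α) - 1) * β ^ α = 1 - β ^ α := by linear_combination hAB
          linarith
      have key' : (1 - p) * (Fbar α (β * z) - z ^ (-α)) ≤ (1 - p) * (1 - β ^ α) :=
        mul_le_mul_of_nonneg_left key (by linarith)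
      simp only [muHat2]
      linarith
  -- Supremum for muT
  have hL0 : 0 < (1 - p) * (β ^ (-α) - 1) * Z₂ ^ (-α) + p * (Z₁ ^ (-α) - Z₂ ^ (-α)) := by
    have h1 : 0 < (1 - p) * (β ^ (-α) - 1) * Z₂ ^ (-α) :=
      mul_pos (mul_pos (by linarith) (by linarith)) hC0
    have h2 : 0 < p * (Z₁ ^ (-α) - Z₂ ^ (-α)) := mul_pos hp0 (by linarith)
    linarith
  -- simplification of muT on (Z₂, Z₂/β]
  have hmuT_right : ∀ z, Z₂ < z → z ≤ Z₂ / β →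
      muT α β p Z₁ Z₂ z - z ^ (-α)
        = (1 - p) * (β ^ (-α) - 1) * z ^ (-α)
          + p * (min ((β * z) ^ (-α)) (Z₁ ^ (-α)) - Z₂ ^ (-α)) := by
    intro z hz1 hz2
    have hz0 : 0 < z := hZ₂0.trans hz1
    have hβz1 : 1 < β * z := lt_of_le_of_lt hhi (by nlinarith)
    have hβz0 : 0 < β * z := by linarith
    have hβzZ₂ : β * z ≤ Z₂ := by
      rw [le_div_iff₀ hβ0] at hz2; linarith [mul_comm z β]
    have hFbar : Fbar α (β * z) = (β * z) ^ (-α) :=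
      min_eq_right (Real.rpow_lt_one_of_one_lt_of_neg hβz1 (neg_neg_of_pos hα)).le
    have hmaxZ₂ : max (β * z) Z₁ ≤ Z₂ := max_le hβzZ₂ hZ.le
    have hmax0 : 0 < max (β * z) Z₁ := lt_of_lt_of_le hZ₁0 (le_max_right _ _)
    have hCle : Z₂ ^ (-α) ≤ (max (β * z) Z₁) ^ (-α) := rpow_neg_anti hα hmax0 hmaxZ₂
    have hmaxmin : (max (β * z) Z₁) ^ (-α) = min ((β * z) ^ (-α)) (Z₁ ^ (-α)) := by
      rcases le_total (β * z) Z₁ with h | h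
      · rw [max_eq_right h, min_eq_right (rpow_neg_anti hα hβz0 h)]
      · rw [max_eq_left h, min_eq_left (rpow_neg_anti hα hZ₁0 h)]
    have hnlt : ¬ z < Z₁ := not_lt.mpr (hZ.le.trans hz1.le)
    have hnle : ¬ z ≤ Z₂ := not_le.mpr hz1
    have hmul : (β * z) ^ (-α) = β ^ (-α) * z ^ (-α) := Real.mul_rpow hβ0.le hz0.le
    have hM : max 0 ((max (β * z) Z₁) ^ (-α) - Z₂ ^ (-α))
        = (max (β * z) Z₁) ^ (-α) - Z₂ ^ (-α) := max_eq_right (sub_nonneg.mpr hCle)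
    simp only [muT, if_neg hnlt, if_neg hnle]
    rw [hM, hFbar, hmaxmin, hmul]
    ring
  have hsup2 : sSup ((fun z => muT α β p Z₁ Z₂ z - z ^ (-α)) '' Icc Z₁ (Z₂ / β))
      = (1 - p) * (β ^ (-α) - 1) * Z₂ ^ (-α) + p * (Z₁ ^ (-α) - Z₂ ^ (-α)) := by
    apply csSup_eq_of_forall_le_of_forall_lt_exists_gt
    · exact (nonempty_Icc.mpr hIcc).image _
    · rintro y ⟨z, ⟨hz1, hz2⟩, rfl⟩
      dsimp only
      have hz0 : 0 < z := hZ₁0.trans_le hz1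
      rcases le_or_gt z Z₂ with h | h
      · -- middle branch: value ≤ 0 ≤ L
        have hnlt : ¬ z < Z₁ := not_lt.mpr hz1
        have hmaxZ₂ : Z₂ ≤ max (z / β) Z₂ := le_max_right _ _
        have hle : (max (z / β) Z₂) ^ (-α) ≤ Z₂ ^ (-α) := rpow_neg_anti hα hZ₂0 hmaxZ₂
        have h0 : p * ((max (z / β) Z₂) ^ (-α) - Z₂ ^ (-α)) ≤ 0 :=
          mul_nonpos_of_nonneg_of_nonpos hp0.le (by linarith)
        simp only [muT, if_neg hnlt, if_pos h]
        nlinarith [h0, hL0]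
      · rw [hmuT_right z h hz2]
        have h1 : z ^ (-α) ≤ Z₂ ^ (-α) := rpow_neg_anti hα hZ₂0 h.le
        have h2 : min ((β * z) ^ (-α)) (Z₁ ^ (-α)) ≤ Z₁ ^ (-α) := min_le_right _ _
        have hcoef : 0 ≤ (1 - p) * (β ^ (-α) - 1) :=
          mul_nonneg (by linarith) (by linarith)
        have k1 : (1 - p) * (β ^ (-α) - 1) * z ^ (-α)
            ≤ (1 - p) * (β ^ (-α) - 1) * Z₂ ^ (-α) := mul_le_mul_of_nonneg_left h1 hcoef
        have k2 : p * (min ((β * z) ^ (-α)) (Z₁ ^ (-α)) - Z₂ ^ (-α))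
            ≤ p * (Z₁ ^ (-α) - Z₂ ^ (-α)) :=
          mul_le_mul_of_nonneg_left (by linarith) hp0.le
        linarith
    · intro w hw
      set h : ℝ → ℝ := fun z =>
        (1 - p) * (β ^ (-α) - 1) * z ^ (-α)
          + p * (min ((β * z) ^ (-α)) (Z₁ ^ (-α)) - Z₂ ^ (-α)) with hh
      have c1 : ContinuousAt (fun z : ℝ => z ^ (-α)) Z₂ :=
        Real.continuousAt_rpow_const Z₂ (-α) (Or.inl hZ₂0.ne')
      have c2 : ContinuousAt (fun z : ℝ => (β * z) ^ (-α)) Z₂ :=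
        ContinuousAt.comp (Real.continuousAt_rpow_const (β * Z₂) (-α)
          (Or.inl (by positivity))) (continuousAt_const.mul continuousAt_id)
      have hcont : ContinuousAt h Z₂ :=
        (continuousAt_const.mul c1).add
          (continuousAt_const.mul ((c2.min continuousAt_const).sub continuousAt_const))
      have hhZ₂ : h Z₂
          = (1 - p) * (β ^ (-α) - 1) * Z₂ ^ (-α) + p * (Z₁ ^ (-α) - Z₂ ^ (-α)) := by
        have hmin : Z₁ ^ (-α) ≤ (β * Z₂) ^ (-α) :=
          rpow_neg_anti hα (by positivity) hdisj
        simp only [hh, min_eq_right hmin]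
      have hev0 : ∀ᶠ z in nhds Z₂, w < h z := by
        have := hcont (Ioi_mem_nhds (show w < h Z₂ from hhZ₂ ▸ hw))
        filter_upwards [this] with x hx using hx
      have hev : ∀ᶠ z in nhdsWithin Z₂ (Ioi Z₂), w < h z :=
        hev0.filter_mono nhdsWithin_le_nhds
      have hmem : Ioo Z₂ (Z₂ / β) ∈ nhdsWithin Z₂ (Ioi Z₂) :=
        Ioo_mem_nhdsGT_of_mem ⟨le_refl _, hZ₂div⟩
      obtain ⟨z, hwz, hz1, hz2⟩ := (hev.and hmem).exists
      refine ⟨muT α β p Z₁ Z₂ z - z ^ (-α), ⟨z, ⟨hZ.le.trans hz1.le, hz2.le⟩, rfl⟩, ?_⟩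
      rw [hmuT_right z hz1 hz2.le]
      exact hwz
  rw [hsup1, hsup2]
  have key2 : (1 - p) * (β ^ (-α) - 1) * (β ^ α - Z₂ ^ (-α))
      = (1 - p) * (1 - β ^ α) - (1 - p) * (β ^ (-α) - 1) * Z₂ ^ (-α) := by
    linear_combination (1 - p) * hAB
  rw [key2]
  constructor <;> intro h <;> linarith
end
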